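/- arXiv:1609.09133 — 2 statements merged into one kernel-verified Lean document; each statement's English description precedes it below -/
import Mathlib

section
/- The generalized Bernoulli numbers attached to a Dirichlet character χ with conductor d can be recovered from the generalized Daehee numbers via B_{m,χ} = Σ_{n=0}^{m} 𝔇_{n,χ} S₂(m,n), where S₂(m,n) are the Stirling numbers of the second kind. -/
open Finset PowerSeries

/-- The formal power series `log(1+t) = ∑_{n≥1} (-1)^{n+1} tⁿ/n`. -/
noncomputable def logOneAdd : PowerSeries ℂ :=
  PowerSeries.mk fun n => if n = 0 then 0 else (-1) ^ (n + 1) / (n : ℂ)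

/-- Stirling numbers of the second kind, defined by
`(eᵗ−1)ⁿ/n! = ∑ₘ S₂(m,n) tᵐ/m!`. -/
noncomputable def stirlingSecond (m n : ℕ) : ℂ :=
  (m.factorial : ℂ) *
    PowerSeries.coeff m (((n.factorial : ℂ))⁻¹ • (PowerSeries.exp ℂ - 1) ^ n)

/-- The formal exponential series `e^{ct} = ∑ₙ cⁿ tⁿ/n!`. -/
noncomputable def expC (c : ℂ) : PowerSeries ℂ :=
  PowerSeries.mk fun n => c ^ n / (n.factorial : ℂ)

/-!
Substituting `t ↦ eᵗ - 1` is a ring endomorphism of `ℂ⟦t⟧`; it sends `1 + t` to `eᵗ` and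
`log (1 + t)` to `t` (both sides have derivative `1` and vanish at `0`). Applied to the
generating-function identity of the Daehee numbers it therefore produces the one of the Bernoulli
numbers, and the coefficients of `f (eᵗ - 1)` are the sums `∑ₙ fₙ · n! S₂(m, n) / m!`.
-/

namespace PowerSeries

theorem coeff_subst_eq_sum_range {R : Type*} [CommRing R] {g : R⟦X⟧}
    (hg : constantCoeff g = 0) (f : R⟦X⟧) (m : ℕ) :
    coeff m (f.subst g) = ∑ n ∈ range (m + 1), coeff n f * coeff m (g ^ n) := by
  rw [coeff_subst' (.of_constantCoeff_zero' hg)]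
  refine finsum_eq_sum_of_support_subset _ fun n hn => ?_
  by_contra hnm
  have hmn : m < n := by simpa using hnm
  have hcoeff : coeff m (g ^ n) = 0 :=
    X_pow_dvd_iff.mp (pow_dvd_pow_of_dvd (X_dvd_iff.mpr hg) n) m hmn
  exact hn (by simp only [hcoeff, smul_zero])

section ExpLog

variable {A : Type*} [CommRing A] [Algebra ℚ A]

theorem constantCoeff_exp_sub_one : constantCoeff (exp A - 1) = 0 := by
  simp [constantCoeff_exp]

theorem one_add_X_subst_exp_sub_one : (1 + X : A⟦X⟧).subst (exp A - 1) = exp A := by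
  rw [← coe_substAlgHom HasSubst.exp_sub_one, map_add, map_one, substAlgHom_X, add_sub_cancel]

theorem one_add_X_mul_derivative_log : (1 + X) * d⁄dX A (log A) = 1 := by
  ext n
  rcases n with _ | n
  · simp [deriv_log]
  · rw [add_mul, one_mul, map_add, coeff_succ_X_mul, deriv_log]
    simp [pow_succ]

theorem log_subst_exp_sub_one [IsAddTorsionFree A] : (log A).subst (exp A - 1) = X := by
  have hE : HasSubst (exp A - 1) := HasSubst.exp_sub_one
  refine derivative.ext ?_ ?_
  · calc d⁄dX A ((log A).subst (exp A - 1))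
        = (d⁄dX A (log A)).subst (exp A - 1) * (1 + X : A⟦X⟧).subst (exp A - 1) := by
          rw [derivative_subst hE, one_add_X_subst_exp_sub_one, map_sub, derivative_exp,
            derivative_one, sub_zero]
      _ = d⁄dX A X := by
          rw [← subst_mul hE, mul_comm, one_add_X_mul_derivative_log, ← coe_substAlgHom hE,
            map_one, derivative_X]
  · rw [constantCoeff_X]
    exact constantCoeff_subst_eq_zero constantCoeff_exp_sub_one _ constantCoeff_log

end ExpLog

end PowerSeries

theorem logOneAdd_eq_log : logOneAdd = log ℂ := by
  ext n
  simp [logOneAdd]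

theorem expC_natCast_eq_exp_pow (k : ℕ) : expC (k : ℂ) = exp ℂ ^ k := by
  ext n
  simp [expC, exp_pow_eq_rescale_exp, div_eq_mul_inv, mul_comm]

theorem expC_natCast_sub_one_ne_zero {d : ℕ} (hd : 0 < d) : expC (d : ℂ) - 1 ≠ 0 := by
  intro h
  simpa [expC, hd.ne'] using congrArg (coeff 1) h

theorem stirlingSecond_eq (m n : ℕ) :
    stirlingSecond m n = m.factorial / n.factorial * coeff m ((exp ℂ - 1) ^ n) := by
  rw [stirlingSecond, LinearMap.map_smul, smul_eq_mul]
  ring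

theorem generalized_bernoulli_eq_sum_daehee
    (d : ℕ) (hd : 0 < d) (χ : DirichletCharacter ℂ d)
    (B : ℕ → ℂ)
    -- generalized Bernoulli numbers: ∑_{j<d} χ(j) t e^{jt}/(e^{dt} − 1) = ∑ₙ Bₙ,χ tⁿ/n!
    (hB : (PowerSeries.mk fun n => B n / (n.factorial : ℂ)) * (expC (d : ℂ) - 1) =
      PowerSeries.X * ∑ j ∈ Finset.range d,
        PowerSeries.C (χ (j : ZMod d)) * expC (j : ℂ))
    (D : ℕ → ℂ)
    -- generalized Daehee numbers:
    -- ∑_{j<d} χ(j) log(1+t)(1+t)ʲ/((1+t)^d − 1) = ∑ₘ 𝔇ₘ,χ tᵐ/m!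
    (hD : (PowerSeries.mk fun m => D m / (m.factorial : ℂ)) *
        ((1 + PowerSeries.X) ^ d - 1) =
      logOneAdd * ∑ j ∈ Finset.range d,
        PowerSeries.C (χ (j : ZMod d)) * (1 + PowerSeries.X) ^ j) :
    ∀ m : ℕ, B m = ∑ n ∈ Finset.range (m + 1), D n * stirlingSecond m n := by
  have hE : HasSubst (exp ℂ - 1) := HasSubst.exp_sub_one
  have hD' := congrArg (subst (exp ℂ - 1)) hD
  simp only [← coe_substAlgHom hE, map_mul, map_sub, map_pow, map_one, map_sum] at hD'
  simp only [coe_substAlgHom, one_add_X_subst_exp_sub_one, logOneAdd_eq_log,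
    log_subst_exp_sub_one, ← expC_natCast_eq_exp_pow, subst_C] at hD'
  have hBD : (mk fun n => B n / (n.factorial : ℂ)) =
      (mk fun n => D n / (n.factorial : ℂ)).subst (exp ℂ - 1) :=
    mul_right_cancel₀ (expC_natCast_sub_one_ne_zero hd) (hB.trans hD'.symm)
  intro m
  have hm := congrArg (coeff m) hBD
  rw [coeff_mk, coeff_subst_eq_sum_range constantCoeff_exp_sub_one,
    div_eq_iff (mod_cast m.factorial_ne_zero), sum_mul] at hm
  rw [hm]
  refine sum_congr rfl fun n _ => ?_
  rw [coeff_mk, stirlingSecond_eq]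
  ring
end

section
/- The fermionic p-adic integral of the binomial coefficient function satisfies ∫_{ℤ_p} C(x,j) dμ_{−1}(x) = (−1)^j/2^j, i.e., lim_{N→∞} Σ_{x=0}^{p^N−1} (−1)^x C(x,j) = (−1)^j/2^j in ℚ_p, for odd prime p. -/
/-!
With `T_j(n) = ∑_{i ≤ j} (-2)^i C(n,i)`, Pascal's rule gives `T_j(n+1) + T_j(n) = 2 (-2)^j C(n,j)`,
and hence, by induction on `n`, `(-2)^{j+1} ∑_{x<n} (-1)^x C(x,j) = (-1)^n T_j(n) - 1`.
For `n = p^N` the sign is `-1`. As `C(n,i)` is a polynomial in `n` vanishing at `0` for `i ≥ 1`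
and `p^N → 0` in `ℚ_p`, `T_j(p^N) → T_j(0) = 1`, so the sums tend to
`-2 / (-2)^{j+1} = (-1)^j / 2^j`.
-/

open Finset Filter Topology

theorem tendsto_natCast_choose {K ι : Type*} [DivisionRing K] [CharZero K] [TopologicalSpace K]
    [IsTopologicalRing K] {l : Filter ι} {a : ι → ℕ} {m : ℕ}
    (h : Tendsto (fun t => (a t : K)) l (𝓝 m)) (i : ℕ) :
    Tendsto (fun t => ((a t).choose i : K)) l (𝓝 (m.choose i)) := by
  simp_rw [Nat.cast_choose_eq_descPochhammer_div]
  exact (((descPochhammer K i).continuous.tendsto _).comp h).div_const _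

/-- The terms of degree at most `j` of the binomial expansion of `(1 - 2) ^ n`. -/
def truncatedBinomialSum (R : Type*) [Ring R] (j n : ℕ) : R :=
  ∑ i ∈ range (j + 1), (-2 : R) ^ i * n.choose i

section

variable {R : Type*} [CommRing R]

theorem truncatedBinomialSum_zero_right (j : ℕ) : truncatedBinomialSum R j 0 = 1 := by
  simp [truncatedBinomialSum, sum_range_succ']

theorem truncatedBinomialSum_succ_add (j n : ℕ) :
    truncatedBinomialSum R j (n + 1) + truncatedBinomialSum R j n = 2 * (-2) ^ j * n.choose j := by
  induction j with
  | zero => simp [truncatedBinomialSum]; ring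
  | succ j ih =>
    simp only [truncatedBinomialSum, sum_range_succ _ (j + 1)] at ih ⊢
    rw [Nat.choose_succ_succ, Nat.cast_add]
    linear_combination ih

theorem neg_two_pow_mul_sum_neg_one_pow_mul_choose (j n : ℕ) :
    (-2 : R) ^ (j + 1) * ∑ x ∈ range n, (-1) ^ x * (x.choose j : R)
      = (-1) ^ n * truncatedBinomialSum R j n - 1 := by
  induction n with
  | zero => simp [truncatedBinomialSum_zero_right]
  | succ n ih =>
    rw [sum_range_succ, mul_add, ih]
    linear_combination (-1 : R) ^ n * truncatedBinomialSum_succ_add (R := R) j n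

end

theorem tendsto_truncatedBinomialSum {K ι : Type*} [Field K] [CharZero K] [TopologicalSpace K]
    [IsTopologicalRing K] {l : Filter ι} {a : ι → ℕ}
    (h : Tendsto (fun t => (a t : K)) l (𝓝 0)) (j : ℕ) :
    Tendsto (fun t => truncatedBinomialSum K j (a t)) l (𝓝 1) := by
  rw [← truncatedBinomialSum_zero_right j]
  refine tendsto_finsetSum _ fun i _ => (tendsto_natCast_choose ?_ i).const_mul _
  simpa using h

theorem fermionic_integral_choose (p : ℕ) [hp : Fact p.Prime] (hodd : Odd p) (j : ℕ) :
    Filter.Tendsto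
      (fun N : ℕ => ∑ x ∈ Finset.range (p ^ N), (-1 : ℚ_[p]) ^ x * (x.choose j : ℚ_[p]))
      Filter.atTop (nhds ((-1) ^ j / 2 ^ j)) := by
  have hpow : Tendsto (fun N : ℕ => ((p ^ N : ℕ) : ℚ_[p])) atTop (𝓝 0) := by
    simpa using tendsto_pow_atTop_nhds_zero_of_norm_lt_one (Padic.norm_p_lt_one (p := p))
  have hsum (N : ℕ) : ∑ x ∈ range (p ^ N), (-1 : ℚ_[p]) ^ x * (x.choose j : ℚ_[p])
      = (-truncatedBinomialSum ℚ_[p] j (p ^ N) - 1) / (-2) ^ (j + 1) := by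
    rw [eq_div_iff (by norm_num), mul_comm,
      neg_two_pow_mul_sum_neg_one_pow_mul_choose (R := ℚ_[p]), (hodd.pow (n := N)).neg_one_pow,
      neg_one_mul]
  have hlim : ((-1 : ℚ_[p]) ^ j / 2 ^ j) = (-1 - 1) / (-2) ^ (j + 1) := by
    have hsign : (-1 : ℚ_[p]) ^ j * (-2) ^ j = 2 ^ j := by rw [← mul_pow]; norm_num
    rw [div_eq_div_iff (by simp) (by norm_num)]
    linear_combination -2 * hsign
  simp_rw [hsum, hlim]
  exact (((tendsto_truncatedBinomialSum hpow j).neg).sub_const 1).div_const _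
end
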